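/- arXiv:1409.7458 — 2 statements merged into one kernel-verified Lean document; each statement's English description precedes it below -/
import Mathlib

section
/- For all S ≥ 2 and n ≥ 1, the minimax mean-squared-error risks satisfy R_H(S²,n) ≤ 3 · ( 2·R_H(S,n) + R_I(S,n) ); equivalently, R_I(S,n) ≥ R_H(S²,n)/3 − 2·R_H(S,n). Here R_I(S,n) is the minimax risk for estimating the mutual information of a joint pmf on [S]×[S] from n i.i.d. pair samples, and R_H(m,n) is the minimax risk for estimating the entropy of a pmf on an alphabet of size m from n i.i.d. samples (identifying the alphabet [S]×[S] with an alphabet of size S²). -/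
/-- Shannon entropy of a pmf `P` on a finite alphabet, with natural logarithm and the
convention `0 ln 0 = 0`. -/
noncomputable def entropy {A : Type*} [Fintype A] (P : A → ℝ) : ℝ :=
  ∑ a, -(P a * Real.log (P a))

/-- Mutual information of a joint pmf `P` on `A × B`: `I(P) = H(P1) + H(P2) − H(P)`. -/
noncomputable def mutualInfo {A B : Type*} [Fintype A] [Fintype B] (P : A × B → ℝ) : ℝ :=
  entropy (fun a => ∑ b, P (a, b)) + entropy (fun b => ∑ a, P (a, b)) - entropy P

/-- Expectation of `f(W^n)` when `W^n = (W_1,…,W_n)` is drawn i.i.d. from the pmf `P`. -/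
noncomputable def expectIID {A : Type*} [Fintype A] {n : ℕ} (P : A → ℝ)
    (f : (Fin n → A) → ℝ) : ℝ :=
  ∑ w : Fin n → A, (∏ k, P (w k)) * f w

/-- `P` is a probability mass function on the finite alphabet `A`. -/
def IsPmf {A : Type*} [Fintype A] (P : A → ℝ) : Prop :=
  (∀ a, 0 ≤ P a) ∧ ∑ a, P a = 1

/-- Minimax mean-squared-error risk for estimating the entropy of a pmf on the alphabet `A`
from `n` i.i.d. samples. -/
noncomputable def entropyRisk (A : Type*) [Fintype A] (n : ℕ) : ℝ :=
  ⨅ f : (Fin n → A) → ℝ, ⨆ Q : {Q : A → ℝ // IsPmf Q},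
    expectIID Q.1 (fun w => (f w - entropy Q.1) ^ 2)

/-- Minimax mean-squared-error risk for estimating the mutual information of a joint pmf on
`[S] × [S]` from `n` i.i.d. pair samples. -/
noncomputable def miRisk (S n : ℕ) : ℝ :=
  ⨅ f : (Fin n → Fin S × Fin S) → ℝ, ⨆ P : {P : Fin S × Fin S → ℝ // IsPmf P},
    expectIID P.1 (fun z => (f z - mutualInfo P.1) ^ 2)

/-!
Since `H(P) = H(P₁) + H(P₂) − I(P)`, entropy estimators applied to the two coordinates of the pair
sample (whose laws are the marginals), minus a mutual information estimator, estimate the joint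
entropy. By `(x + y − z)² ≤ 3 (x² + y² + z²)` its squared error is at most three
times the sum of the three squared errors, so near-minimax choices of the two estimators give the
bound.
-/

open Finset

section Expectation

variable {A B : Type*} [Fintype A] [Fintype B] {n : ℕ}

def pmfMap [DecidableEq B] (g : A → B) (P : A → ℝ) (b : B) : ℝ :=
  ∑ a with g a = b, P a

lemma IsPmf.le_one {P : A → ℝ} (hP : IsPmf P) (a : A) : P a ≤ 1 :=
  hP.2 ▸ single_le_sum (fun b _ => hP.1 b) (mem_univ a)

lemma IsPmf.map [DecidableEq B] {P : A → ℝ} (hP : IsPmf P) (g : A → B) : IsPmf (pmfMap g P) :=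
  ⟨fun _ => sum_nonneg fun a _ => hP.1 a, (sum_fiberwise univ g P).trans hP.2⟩

lemma pmfMap_fst [DecidableEq A] (P : A × B → ℝ) :
    pmfMap Prod.fst P = fun a => ∑ b, P (a, b) := by
  ext a
  rw [pmfMap, sum_filter, Fintype.sum_prod_type, sum_comm]
  simp

lemma pmfMap_snd [DecidableEq B] (P : A × B → ℝ) :
    pmfMap Prod.snd P = fun b => ∑ a, P (a, b) := by
  ext b
  rw [pmfMap, sum_filter, Fintype.sum_prod_type]
  simp

lemma expectIID_comp [DecidableEq B] (g : A → B) (P : A → ℝ) (f : (Fin n → B) → ℝ) :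
    expectIID P (fun w => f (g ∘ w)) = expectIID (pmfMap g P) f := by
  have hfiber : ∀ v : Fin n → B,
      ∏ k, pmfMap g P (v k) = ∑ w with g ∘ w = v, ∏ k, P (w k) := by
    intro v
    simp only [pmfMap]
    rw [prod_univ_sum]
    congr 1
    ext w
    simp [Fintype.mem_piFinset, funext_iff]
  simp only [expectIID, hfiber, sum_mul]
  rw [← sum_fiberwise univ (fun w => g ∘ w)]
  refine sum_congr rfl fun v _ => sum_congr rfl fun w hw => ?_
  rw [(mem_filter.1 hw).2]

lemma expectIID_nonneg {P : A → ℝ} (hP : IsPmf P) {f : (Fin n → A) → ℝ}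
    (hf : ∀ w, 0 ≤ f w) : 0 ≤ expectIID P f :=
  sum_nonneg fun w _ => mul_nonneg (prod_nonneg fun _ _ => hP.1 _) (hf w)

lemma expectIID_mono {P : A → ℝ} (hP : IsPmf P) {f g : (Fin n → A) → ℝ}
    (h : ∀ w, f w ≤ g w) : expectIID P f ≤ expectIID P g :=
  sum_le_sum fun w _ => mul_le_mul_of_nonneg_left (h w) (prod_nonneg fun _ _ => hP.1 _)

lemma expectIID_const {P : A → ℝ} (hP : IsPmf P) (c : ℝ) :
    expectIID P (fun _ : Fin n → A => c) = c := by
  rw [expectIID, ← sum_mul, ← Fintype.piFinset_univ, ← prod_univ_sum, hP.2, prod_const_one,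
    one_mul]

lemma expectIID_add (P : A → ℝ) (f g : (Fin n → A) → ℝ) :
    expectIID P (fun w => f w + g w) = expectIID P f + expectIID P g := by
  simp only [expectIID, mul_add, sum_add_distrib]

lemma expectIID_const_mul (P : A → ℝ) (c : ℝ) (f : (Fin n → A) → ℝ) :
    expectIID P (fun w => c * f w) = c * expectIID P f := by
  simp only [expectIID, mul_sum, mul_left_comm]

end Expectation

section Entropy

variable {A B : Type*} [Fintype A] [Fintype B]

lemma entropy_eq_sum_negMulLog (P : A → ℝ) : entropy P = ∑ a, Real.negMulLog (P a) := by
  simp only [entropy, Real.negMulLog, neg_mul]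

lemma entropy_nonneg {P : A → ℝ} (hP : IsPmf P) : 0 ≤ entropy P :=
  entropy_eq_sum_negMulLog P ▸ sum_nonneg fun a _ => Real.negMulLog_nonneg (hP.1 a) (hP.le_one a)

lemma entropy_le_card {P : A → ℝ} (hP : IsPmf P) : entropy P ≤ Fintype.card A :=
  calc entropy P ≤ ∑ a, (1 - P a) := entropy_eq_sum_negMulLog P ▸
        sum_le_sum fun a _ => Real.negMulLog_le_one_sub_self (hP.1 a)
    _ ≤ Fintype.card A := by
      rw [sum_sub_distrib, hP.2]
      simp

lemma abs_entropy_le_card {P : A → ℝ} (hP : IsPmf P) : |entropy P| ≤ Fintype.card A :=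
  abs_le.2 ⟨by linarith [entropy_nonneg hP, (Fintype.card A).cast_nonneg (α := ℝ)],
    entropy_le_card hP⟩

lemma abs_mutualInfo_le_card {P : A × B → ℝ} (hP : IsPmf P) :
    |mutualInfo P| ≤ Fintype.card A + Fintype.card B + Fintype.card (A × B) := by
  classical
  have h1 := hP.map Prod.fst
  have h2 := hP.map Prod.snd
  rw [pmfMap_fst] at h1
  rw [pmfMap_snd] at h2
  have := (Fintype.card A).cast_nonneg (α := ℝ)
  have := (Fintype.card B).cast_nonneg (α := ℝ)
  have := (Fintype.card (A × B)).cast_nonneg (α := ℝ)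
  rw [mutualInfo, abs_le]
  constructor <;>
  linarith [entropy_nonneg h1, entropy_le_card h1, entropy_nonneg h2, entropy_le_card h2,
    entropy_nonneg hP, entropy_le_card hP]

end Entropy

section Risk

variable {A B : Type*} [Fintype A] [Fintype B] {n : ℕ}

noncomputable def mseRisk (f : (Fin n → A) → ℝ) (T : (A → ℝ) → ℝ) (Q : A → ℝ) : ℝ :=
  expectIID Q fun w => (f w - T Q) ^ 2

variable (A n) in
noncomputable def minimaxRisk (T : (A → ℝ) → ℝ) : ℝ :=
  ⨅ f : (Fin n → A) → ℝ, ⨆ Q : {Q : A → ℝ // IsPmf Q}, mseRisk f T Q.1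

lemma entropyRisk_eq_minimaxRisk : entropyRisk A n = minimaxRisk A n entropy := rfl

lemma miRisk_eq_minimaxRisk (S : ℕ) : miRisk S n = minimaxRisk (Fin S × Fin S) n mutualInfo :=
  rfl

lemma mseRisk_nonneg (f : (Fin n → A) → ℝ) (T : (A → ℝ) → ℝ) {Q : A → ℝ} (hQ : IsPmf Q) :
    0 ≤ mseRisk f T Q :=
  expectIID_nonneg hQ fun _ => sq_nonneg _

lemma minimaxRisk_nonneg (T : (A → ℝ) → ℝ) : 0 ≤ minimaxRisk A n T :=
  Real.iInf_nonneg fun f => Real.iSup_nonneg fun Q => mseRisk_nonneg f T Q.2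

lemma minimaxRisk_le {T : (A → ℝ) → ℝ} (f : (Fin n → A) → ℝ) {c : ℝ} (hc : 0 ≤ c)
    (h : ∀ Q, IsPmf Q → mseRisk f T Q ≤ c) : minimaxRisk A n T ≤ c :=
  (ciInf_le ⟨0, Set.forall_mem_range.2 fun f => Real.iSup_nonneg fun Q => mseRisk_nonneg f T Q.2⟩
    f).trans (Real.iSup_le (fun Q => h Q.1 Q.2) hc)

lemma exists_mseRisk_le_minimaxRisk_add {T : (A → ℝ) → ℝ} {L : ℝ}
    (hT : ∀ Q, IsPmf Q → |T Q| ≤ L) {ε : ℝ} (hε : 0 < ε) :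
    ∃ f : (Fin n → A) → ℝ, ∀ Q, IsPmf Q → mseRisk f T Q ≤ minimaxRisk A n T + ε := by
  obtain ⟨f, hf⟩ := exists_lt_of_ciInf_lt (lt_add_of_pos_right (minimaxRisk A n T) hε)
  refine ⟨f, fun Q hQ => (le_ciSup ?_ (⟨Q, hQ⟩ : {Q : A → ℝ // IsPmf Q})).trans hf.le⟩
  obtain ⟨M, hM⟩ := Finite.bddAbove_range fun w => |f w|
  refine ⟨(M + L) ^ 2, Set.forall_mem_range.2 fun Q => ?_⟩
  refine (expectIID_mono Q.2 fun w => ?_).trans (expectIID_const Q.2 _).le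
  have hbound : |f w - T Q.1| ≤ M + L :=
    (abs_sub _ _).trans (add_le_add (hM ⟨w, rfl⟩) (hT Q.1 Q.2))
  simpa only [sq_abs] using pow_le_pow_left₀ (abs_nonneg _) hbound 2

end Risk

lemma sq_add_sub_le (x y z : ℝ) : (x + y - z) ^ 2 ≤ 3 * (x ^ 2 + y ^ 2 + z ^ 2) := by
  nlinarith [sq_nonneg (x - y), sq_nonneg (x + z), sq_nonneg (y + z)]

section Product

variable {A B : Type*} [Fintype A] [Fintype B] [DecidableEq A] [DecidableEq B] {n : ℕ}

lemma mseRisk_entropy_le (fA : (Fin n → A) → ℝ) (fB : (Fin n → B) → ℝ)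
    (g : (Fin n → A × B) → ℝ) {P : A × B → ℝ} (hP : IsPmf P) :
    mseRisk (fun w => fA (Prod.fst ∘ w) + fB (Prod.snd ∘ w) - g w) entropy P ≤
      3 * (mseRisk fA entropy (pmfMap Prod.fst P) + mseRisk fB entropy (pmfMap Prod.snd P) +
        mseRisk g mutualInfo P) := by
  have hsplit : entropy P = entropy (pmfMap Prod.fst P) + entropy (pmfMap Prod.snd P) -
      mutualInfo P := by
    rw [mutualInfo, pmfMap_fst, pmfMap_snd]
    ring
  simp only [mseRisk, ← expectIID_comp, ← expectIID_add, ← expectIID_const_mul]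
  refine expectIID_mono hP fun w => ?_
  rw [hsplit]
  convert sq_add_sub_le (fA (Prod.fst ∘ w) - entropy (pmfMap Prod.fst P))
    (fB (Prod.snd ∘ w) - entropy (pmfMap Prod.snd P)) (g w - mutualInfo P) using 2
  ring

theorem minimaxRisk_entropy_prod_le :
    minimaxRisk (A × B) n entropy ≤ 3 * (minimaxRisk A n entropy + minimaxRisk B n entropy +
      minimaxRisk (A × B) n mutualInfo) := by
  refine le_of_forall_pos_le_add fun ε hε => ?_
  have hδ : 0 < ε / 9 := by positivity
  obtain ⟨fA, hfA⟩ := exists_mseRisk_le_minimaxRisk_add (n := n) (T := entropy)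
    (fun _ => abs_entropy_le_card (A := A)) hδ
  obtain ⟨fB, hfB⟩ := exists_mseRisk_le_minimaxRisk_add (n := n) (T := entropy)
    (fun _ => abs_entropy_le_card (A := B)) hδ
  obtain ⟨g, hg⟩ := exists_mseRisk_le_minimaxRisk_add (n := n) (T := mutualInfo)
    (fun _ => abs_mutualInfo_le_card (A := A) (B := B)) hδ
  have hA := minimaxRisk_nonneg (A := A) (n := n) entropy
  have hB := minimaxRisk_nonneg (A := B) (n := n) entropy
  have hI := minimaxRisk_nonneg (A := A × B) (n := n) mutualInfo
  refine minimaxRisk_le (fun w => fA (Prod.fst ∘ w) + fB (Prod.snd ∘ w) - g w) (by positivity)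
    fun P hP => ?_
  calc _ ≤ 3 * (mseRisk fA entropy (pmfMap Prod.fst P) + mseRisk fB entropy (pmfMap Prod.snd P) +
        mseRisk g mutualInfo P) := mseRisk_entropy_le fA fB g hP
    _ ≤ 3 * ((minimaxRisk A n entropy + ε / 9) + (minimaxRisk B n entropy + ε / 9) +
        (minimaxRisk (A × B) n mutualInfo + ε / 9)) := by
      gcongr
      exacts [hfA _ (hP.map _), hfB _ (hP.map _), hg P hP]
    _ = _ := by ring

end Product

theorem entropyRisk_sq_le_three_mul_general (S n : ℕ) :
    entropyRisk (Fin S × Fin S) n ≤ 3 * (2 * entropyRisk (Fin S) n + miRisk S n) ∧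
    miRisk S n ≥ entropyRisk (Fin S × Fin S) n / 3 - 2 * entropyRisk (Fin S) n := by
  have h := minimaxRisk_entropy_prod_le (A := Fin S) (B := Fin S) (n := n)
  rw [← entropyRisk_eq_minimaxRisk, ← entropyRisk_eq_minimaxRisk, ← miRisk_eq_minimaxRisk] at h
  constructor <;> linarith

/-- `R_H(S²,n) ≤ 3 (2 R_H(S,n) + R_I(S,n))`; equivalently,
`R_I(S,n) ≥ R_H(S²,n)/3 − 2 R_H(S,n)` (identifying the alphabet of size `S²` with
`[S] × [S]`). -/
theorem entropyRisk_sq_le_three_mul (S n : ℕ) (hS : 2 ≤ S) (hn : 1 ≤ n) :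
    entropyRisk (Fin S × Fin S) n ≤ 3 * (2 * entropyRisk (Fin S) n + miRisk S n) ∧
    miRisk S n ≥ entropyRisk (Fin S × Fin S) n / 3 - 2 * entropyRisk (Fin S) n :=
  entropyRisk_sq_le_three_mul_general S n
end

section
/- (Optimality of the tree projection.) Let d ≥ 2, let X_1, …, X_d be finite nonempty alphabets, let P be a pmf on X_1 × ⋯ × X_d with P(x) > 0 for all x, and let T be a rooted spanning tree on {1,…,d} with root r and parent map π. Let Q be any pmf on X_1 × ⋯ × X_d with Q(x) > 0 for all x that factorizes along T, i.e., Q(x) = Q_{X_r}(x_r) · Π_{i ≠ r} Q_{X_i | X_{π(i)}}(x_i | x_{π(i)}). Then D(P ‖ Q) ≥ D(P ‖ Q_T), where Q_T(x) = P_{X_r}(x_r) · Π_{i ≠ r} P_{X_i | X_{π(i)}}(x_i | x_{π(i)}) is the projection of P onto the tree T built from P's own marginals and conditionals. -/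
/-- Kullback–Leibler divergence `D(P ‖ Q) = Σ_{a : P(a) > 0} P(a) ln(P(a)/Q(a))`. -/
noncomputable def klDiv {A : Type*} [Fintype A] (P Q : A → ℝ) : ℝ :=
  ∑ a ∈ Finset.univ.filter (fun a => 0 < P a), P a * Real.log (P a / Q a)

/-- One-coordinate marginal `P_{X_i}` of a pmf `P` on a finite product. -/
noncomputable def marg {d : ℕ} {X : Fin d → Type*} [∀ i, Fintype (X i)]
    [∀ i, DecidableEq (X i)] (P : (∀ i, X i) → ℝ) (i : Fin d) : X i → ℝ :=
  fun a => ∑ x : ∀ j, X j, if x i = a then P x else 0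

/-- Two-coordinate marginal `P_{X_i, X_j}` of a pmf `P` on a finite product. -/
noncomputable def pairMarg {d : ℕ} {X : Fin d → Type*} [∀ i, Fintype (X i)]
    [∀ i, DecidableEq (X i)] (P : (∀ i, X i) → ℝ) (i j : Fin d) : X i × X j → ℝ :=
  fun p => ∑ x : ∀ j', X j', if x i = p.1 ∧ x j = p.2 then P x else 0

/-- Conditional pmf `P_{X_i | X_j}(a | b) = P_{X_i,X_j}(a,b) / P_{X_j}(b)`. -/
noncomputable def condProb {d : ℕ} {X : Fin d → Type*} [∀ i, Fintype (X i)]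
    [∀ i, DecidableEq (X i)] (P : (∀ i, X i) → ℝ) (i j : Fin d) (a : X i) (b : X j) : ℝ :=
  pairMarg P i j (a, b) / marg P j b

/-- The projection of `P` onto the rooted spanning tree with root `r` and parent map `π`:
`Q_T(x) = P_{X_r}(x_r) · Π_{i ≠ r} P_{X_i | X_{π(i)}}(x_i | x_{π(i)})`. -/
noncomputable def treeProj {d : ℕ} {X : Fin d → Type*} [∀ i, Fintype (X i)]
    [∀ i, DecidableEq (X i)] (P : (∀ i, X i) → ℝ) (r : Fin d) (π : Fin d → Fin d) :
    (∀ i, X i) → ℝ :=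
  fun x => marg P r (x r) *
    ∏ i ∈ Finset.univ.filter (fun i => i ≠ r), condProb P i (π i) (x i) (x (π i))

open Finset

theorem sub_le_mul_log_div {p q : ℝ} (hp : 0 < p) (hq : 0 < q) :
    p - q ≤ p * Real.log (p / q) := by
  have h := Real.one_sub_inv_le_log_of_pos (div_pos hp hq)
  rw [inv_div] at h
  calc p - q = p * (1 - q / p) := by field_simp
    _ ≤ p * Real.log (p / q) := mul_le_mul_of_nonneg_left h hp.le

theorem sum_mul_log_div_nonneg {ι : Type*} [Fintype ι] {p q : ι → ℝ} (hp : ∀ i, 0 < p i)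
    (hq : ∀ i, 0 < q i) (hqp : ∑ i, q i ≤ ∑ i, p i) :
    0 ≤ ∑ i, p i * Real.log (p i / q i) :=
  calc 0 ≤ ∑ i, (p i - q i) := by rw [sum_sub_distrib]; linarith
    _ ≤ ∑ i, p i * Real.log (p i / q i) :=
      sum_le_sum fun i _ => sub_le_mul_log_div (hp i) (hq i)

theorem klDiv_sub_klDiv {A : Type*} [Fintype A] {P Q R : A → ℝ} (hP : ∀ a, 0 < P a)
    (hQ : ∀ a, 0 < Q a) (hR : ∀ a, 0 < R a) :
    klDiv P Q - klDiv P R = ∑ a, P a * Real.log (R a / Q a) := by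
  rw [klDiv, klDiv, filter_true_of_mem fun a _ => hP a, ← sum_sub_distrib]
  refine sum_congr rfl fun a _ => ?_
  rw [Real.log_div (hP a).ne' (hQ a).ne', Real.log_div (hP a).ne' (hR a).ne',
    Real.log_div (hR a).ne' (hQ a).ne']
  ring

theorem apply_ne_self_of_iterate_eq {n : Type*} {π : n → n} {r i : n}
    (htree : ∃ k, π^[k] i = r) (hi : i ≠ r) : π i ≠ i := fun h => by
  obtain ⟨k, hk⟩ := htree
  exact hi (Function.iterate_fixed h k ▸ hk)

section Marginals

variable {d : ℕ} {X : Fin d → Type*} [∀ i, Fintype (X i)] [∀ i, DecidableEq (X i)]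
  (P : (∀ i, X i) → ℝ)

theorem sum_marg_mul (j : Fin d) (f : X j → ℝ) :
    ∑ b, marg P j b * f b = ∑ x, P x * f (x j) := by
  simp_rw [marg, sum_mul, ite_mul, zero_mul]
  rw [sum_comm]
  exact sum_congr rfl fun x _ => by simp

theorem sum_marg (j : Fin d) : ∑ b, marg P j b = ∑ x, P x := by
  simpa using sum_marg_mul P j fun _ => 1

theorem sum_pairMarg_mul (i j : Fin d) (g : X i → X j → ℝ) :
    ∑ a, ∑ b, pairMarg P i j (a, b) * g a b = ∑ x, P x * g (x i) (x j) := by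
  simp_rw [pairMarg, sum_mul, ite_mul, zero_mul]
  rw [sum_congr rfl fun a _ => sum_comm, sum_comm]
  exact sum_congr rfl fun x _ => by simp [ite_and]

theorem sum_pairMarg_fst (i j : Fin d) (b : X j) :
    ∑ a, pairMarg P i j (a, b) = marg P j b := by
  unfold pairMarg marg
  rw [sum_comm]
  exact sum_congr rfl fun x _ => by simp [ite_and]

variable [∀ i, Nonempty (X i)] {P}

theorem marg_pos (hP : ∀ x, 0 < P x) (j : Fin d) (b : X j) : 0 < marg P j b := by
  refine sum_pos' (fun x _ => by split_ifs; exacts [(hP x).le, le_rfl]) ?_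
  exact ⟨Function.update (Classical.arbitrary _) j b, mem_univ _, by simpa using hP _⟩

theorem pairMarg_pos (hP : ∀ x, 0 < P x) {i j : Fin d} (hij : i ≠ j) (a : X i) (b : X j) :
    0 < pairMarg P i j (a, b) := by
  refine sum_pos' (fun x _ => by split_ifs; exacts [(hP x).le, le_rfl]) ?_
  refine ⟨Function.update (Function.update (Classical.arbitrary _) i a) j b, mem_univ _, ?_⟩
  rw [if_pos ⟨by rw [Function.update_of_ne hij, Function.update_self], Function.update_self ..⟩]
  exact hP _

theorem condProb_pos (hP : ∀ x, 0 < P x) {i j : Fin d} (hij : i ≠ j) (a : X i) (b : X j) :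
    0 < condProb P i j a b :=
  div_pos (pairMarg_pos hP hij a b) (marg_pos hP j b)

theorem sum_condProb (hP : ∀ x, 0 < P x) (i j : Fin d) (b : X j) :
    ∑ a, condProb P i j a b = 1 := by
  unfold condProb
  rw [← sum_div, sum_pairMarg_fst, div_self (marg_pos hP j b).ne']

end Marginals

section TreeProjection

variable {d : ℕ} {X : Fin d → Type*} [∀ i, Fintype (X i)] [∀ i, DecidableEq (X i)]
  [∀ i, Nonempty (X i)] {P Q : (∀ i, X i) → ℝ} {r : Fin d} {π : Fin d → Fin d}

theorem treeProj_pos (hP : ∀ x, 0 < P x) (hπ : ∀ i, i ≠ r → π i ≠ i) (x : ∀ i, X i) :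
    0 < treeProj P r π x :=
  mul_pos (marg_pos hP r _) <| prod_pos fun i hi =>
    condProb_pos hP (hπ i (mem_filter.1 hi).2).symm _ _

theorem log_treeProj (hP : ∀ x, 0 < P x) (hπ : ∀ i, i ≠ r → π i ≠ i) (x : ∀ i, X i) :
    Real.log (treeProj P r π x) = Real.log (marg P r (x r)) +
      ∑ i ∈ univ.filter (· ≠ r), Real.log (condProb P i (π i) (x i) (x (π i))) := by
  rw [treeProj, Real.log_mul (marg_pos hP r _).ne' (prod_pos fun i hi =>
      condProb_pos hP (hπ i (mem_filter.1 hi).2).symm _ _).ne',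
    Real.log_prod fun i hi => (condProb_pos hP (hπ i (mem_filter.1 hi).2).symm _ _).ne']

theorem log_treeProj_div (hP : ∀ x, 0 < P x) (hQ : ∀ x, 0 < Q x)
    (hπ : ∀ i, i ≠ r → π i ≠ i) (x : ∀ i, X i) :
    Real.log (treeProj P r π x / treeProj Q r π x) =
      Real.log (marg P r (x r) / marg Q r (x r)) +
      ∑ i ∈ univ.filter (· ≠ r),
        Real.log (condProb P i (π i) (x i) (x (π i)) / condProb Q i (π i) (x i) (x (π i))) := by
  have hne : ∀ i ∈ univ.filter (· ≠ r), i ≠ π i := fun i hi => (hπ i (mem_filter.1 hi).2).symm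
  rw [Real.log_div (treeProj_pos hP hπ x).ne' (treeProj_pos hQ hπ x).ne', log_treeProj hP hπ,
    log_treeProj hQ hπ, Real.log_div (marg_pos hP r _).ne' (marg_pos hQ r _).ne',
    add_sub_add_comm, ← sum_sub_distrib]
  congr 1
  exact sum_congr rfl fun i hi =>
    (Real.log_div (condProb_pos hP (hne i hi) _ _).ne' (condProb_pos hQ (hne i hi) _ _).ne').symm

end TreeProjection

section Divergences

variable {d : ℕ} {X : Fin d → Type*} [∀ i, Fintype (X i)] [∀ i, DecidableEq (X i)]
  [∀ i, Nonempty (X i)] {P Q : (∀ i, X i) → ℝ}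

theorem sum_mul_log_marg_div_nonneg (hP : ∀ x, 0 < P x) (hQ : ∀ x, 0 < Q x)
    (hQP : ∑ x, Q x ≤ ∑ x, P x) (j : Fin d) :
    0 ≤ ∑ x, P x * Real.log (marg P j (x j) / marg Q j (x j)) := by
  rw [← sum_marg_mul P j fun b => Real.log (marg P j b / marg Q j b)]
  exact sum_mul_log_div_nonneg (marg_pos hP j) (marg_pos hQ j) (by rwa [sum_marg, sum_marg])

theorem sum_mul_log_condProb_div_nonneg (hP : ∀ x, 0 < P x) (hQ : ∀ x, 0 < Q x)
    {i j : Fin d} (hij : i ≠ j) :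
    0 ≤ ∑ x, P x * Real.log (condProb P i j (x i) (x j) / condProb Q i j (x i) (x j)) := by
  rw [← sum_pairMarg_mul P i j fun a b => Real.log (condProb P i j a b / condProb Q i j a b),
    sum_comm]
  refine sum_nonneg fun b _ => ?_
  have hsplit : ∀ a, condProb P i j a b / condProb Q i j a b =
      pairMarg P i j (a, b) / (marg P j b * condProb Q i j a b) := fun a => div_div _ _ _
  simp_rw [hsplit]
  refine sum_mul_log_div_nonneg (fun a => pairMarg_pos hP hij a b)
    (fun a => mul_pos (marg_pos hP j b) (condProb_pos hQ hij a b)) ?_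
  rw [← mul_sum, sum_condProb hQ, mul_one, sum_pairMarg_fst]

end Divergences

theorem klDiv_treeProj_le_general {d : ℕ} {X : Fin d → Type*}
    [∀ i, Fintype (X i)] [∀ i, Nonempty (X i)] [∀ i, DecidableEq (X i)]
    (P : (∀ i, X i) → ℝ) (hP1 : ∑ x, P x = 1) (hPpos : ∀ x, 0 < P x)
    (r : Fin d) (π : Fin d → Fin d)
    (htree : ∀ i : Fin d, ∃ k : ℕ, π^[k] i = r)
    (Q : (∀ i, X i) → ℝ) (hQ1 : ∑ x, Q x = 1) (hQpos : ∀ x, 0 < Q x)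
    (hQfact : ∀ x, Q x = marg Q r (x r) *
      ∏ i ∈ Finset.univ.filter (fun i => i ≠ r), condProb Q i (π i) (x i) (x (π i))) :
    klDiv P Q ≥ klDiv P (treeProj P r π) := by
  have hπ : ∀ i, i ≠ r → π i ≠ i := fun i => apply_ne_self_of_iterate_eq (htree i)
  have hQT : Q = treeProj Q r π := funext hQfact
  rw [ge_iff_le, ← sub_nonneg, klDiv_sub_klDiv hPpos hQpos (treeProj_pos hPpos hπ), hQT]
  simp_rw [log_treeProj_div hPpos hQpos hπ, mul_add, mul_sum, sum_add_distrib]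
  rw [sum_comm]
  exact add_nonneg (sum_mul_log_marg_div_nonneg hPpos hQpos (hQ1.trans hP1.symm).le r)
    (sum_nonneg fun i hi =>
      sum_mul_log_condProb_div_nonneg hPpos hQpos (hπ i (mem_filter.1 hi).2).symm)

/-- Optimality of the tree projection: among all everywhere-positive pmfs `Q` that factorize
along the rooted spanning tree `T` (root `r`, parent map `π`), the projection `Q_T` of `P`
onto `T`, built from `P`'s own marginals and conditionals, minimizes `D(P ‖ ·)`:
`D(P ‖ Q) ≥ D(P ‖ Q_T)`. -/
theorem klDiv_treeProj_le {d : ℕ} (hd : 2 ≤ d) {X : Fin d → Type*}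
    [∀ i, Fintype (X i)] [∀ i, Nonempty (X i)] [∀ i, DecidableEq (X i)]
    (P : (∀ i, X i) → ℝ) (hP1 : ∑ x, P x = 1) (hPpos : ∀ x, 0 < P x)
    (r : Fin d) (π : Fin d → Fin d)
    (htree : ∀ i : Fin d, ∃ k : ℕ, π^[k] i = r)
    (Q : (∀ i, X i) → ℝ) (hQ1 : ∑ x, Q x = 1) (hQpos : ∀ x, 0 < Q x)
    (hQfact : ∀ x, Q x = marg Q r (x r) *
      ∏ i ∈ Finset.univ.filter (fun i => i ≠ r), condProb Q i (π i) (x i) (x (π i))) :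
    klDiv P Q ≥ klDiv P (treeProj P r π) :=
  klDiv_treeProj_le_general P hP1 hPpos r π htree Q hQ1 hQpos hQfact
end
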